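/- Let R be a unique factorization domain with a ring involution *, and let λ, μ, ν be pairwise non-*-associate irreducibles of R, each an associate of its own image under * (self-dual). Let K = ℕ⁴ with componentwise addition, let π : ℕ⁴ → ℤ be π(a,b,c,d) = a − b + c − d, and let χ(a,b,c,d) = λ^{a+b}·(μν)^{c+d}. Then: (i) if χ(v) is a unit of R then v = 0 (so the subgroup Δ of ℤ is trivial); (ii) for every n ∈ ℤ there exists v ∈ ℕ⁴ with π(v) = n and χ(v) an associate of a power of λ (so C_λ = ℤ and Φ_L is an isomorphism); (iii) for every irreducible ζ of R not *-associate to λ, if χ(v) is an associate of S(ζ)^k for some k ≥ 0 then v = 0 (so C_ζ is trivial); (iv) for every irreducible ζ of R there exists v ∈ ℕ⁴ with π(v) = 1 and ζ not dividing χ(v) (so 1 ∈ C^ζ for all ζ, and hence Φ_R is not injective). -/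

import Mathlib

/-!
The prime factors of `χ(a,b,c,d) = λ^(a+b) (μν)^(c+d)` are `λ` (if `a + b > 0`) and `μ`, `ν`
(if `c + d > 0`), while every prime factor of `S(ζ)^k` divides `ζ ζ*`, hence is a `*`-associate
of `ζ`. Since `*` is an involution, being `*`-associate is an equivalence relation, so
`χ(v) ~ S(ζ)^k` with `v ≠ 0` would make `ζ` a `*`-associate of `λ`, or `μ` one of `ν`.
The witnesses are `v = (n⁺, n⁻, 0, 0)` for (ii), and for (iv) `v = (1, 0, 0, 0)` unless
`ζ ∣ λ`, in which case `ζ ~ λ` does not divide `μν` and `v = (0, 0, 1, 0)` works.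
-/

open Classical in
/-- `S(ζ)`: `ζ` itself if `ζ` is an associate of its involutive image `ζ*`,
and `ζ · ζ*` otherwise. -/
noncomputable def Sdual {R : Type*} [CommRing R] (σ : R →+* R) (l : R) : R :=
  if Associated l (σ l) then l else l * σ l

/-- `λ` and `μ` are `*`-associates: `λ` is an associate of `μ` or of `μ* = σ μ`. -/
def StarAssoc {R : Type*} [CommRing R] (σ : R →+* R) (l m : R) : Prop :=
  Associated l m ∨ Associated l (σ m)

theorem isUnit_pow_mul_pow_iff {M : Type*} [CommMonoid M] {l m n : M} (hl : ¬IsUnit l)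
    (hm : ¬IsUnit m) {i j : ℕ} : IsUnit (l ^ i * (m * n) ^ j) ↔ i = 0 ∧ j = 0 := by
  simp [IsUnit.mul_iff, isUnit_pow_iff_of_not_isUnit, hl, hm]

section

variable {R : Type*} [CommRing R] {σ : R →+* R}

namespace StarAssoc

theorem symm (hσ : Function.Involutive σ) {a b : R} (h : StarAssoc σ a b) :
    StarAssoc σ b a := by
  rcases h with h | h
  · exact Or.inl h.symm
  · exact Or.inr (by simpa only [hσ b] using (h.map σ).symm)

theorem trans (hσ : Function.Involutive σ) {a b c : R} (hab : StarAssoc σ a b)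
    (hbc : StarAssoc σ b c) : StarAssoc σ a c := by
  rcases hab with hab | hab <;> rcases hbc with hbc | hbc
  · exact Or.inl (hab.trans hbc)
  · exact Or.inr (hab.trans hbc)
  · exact Or.inr (hab.trans (hbc.map σ))
  · exact Or.inl (hab.trans (by simpa only [hσ c] using hbc.map σ))

end StarAssoc

theorem sdual_dvd_mul_self (ζ : R) : Sdual σ ζ ∣ ζ * σ ζ := by
  unfold Sdual
  split_ifs
  exacts [dvd_mul_right ζ (σ ζ), dvd_rfl]

theorem Prime.starAssoc_of_dvd_sdual_pow [IsDomain R] (hσ : Function.Involutive σ) {p ζ : R}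
    (hp : Prime p) (hζ : Irreducible ζ) {k : ℕ} (h : p ∣ Sdual σ ζ ^ k) :
    StarAssoc σ p ζ := by
  have hσζ : Irreducible (σ ζ) := hζ.map (RingEquiv.ofBijective σ hσ.bijective)
  rcases hp.dvd_or_dvd ((hp.dvd_of_dvd_pow h).trans (sdual_dvd_mul_self ζ)) with h | h
  · exact Or.inl (hp.irreducible.associated_of_dvd hζ h)
  · exact Or.inr (hp.irreducible.associated_of_dvd hσζ h)

theorem exponents_eq_zero_of_associated_sdual_pow [IsDomain R] (hσ : Function.Involutive σ)
    {l m n ζ : R} (hl : Prime l) (hm : Prime m) (hn : Prime n) (hmn : ¬StarAssoc σ m n)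
    (hζ : Irreducible ζ) (hζl : ¬StarAssoc σ ζ l) {i j k : ℕ}
    (h : Associated (l ^ i * (m * n) ^ j) (Sdual σ ζ ^ k)) : i = 0 ∧ j = 0 := by
  have hstar : ∀ p, Prime p → p ∣ l ^ i * (m * n) ^ j → StarAssoc σ p ζ :=
    fun p hp hdvd => hp.starAssoc_of_dvd_sdual_pow hσ hζ (hdvd.trans h.dvd)
  constructor
  · by_contra hi
    exact hζl ((hstar l hl (dvd_mul_of_dvd_left (dvd_pow_self l hi) _)).symm hσ)
  · by_contra hj
    have hmn_dvd : m * n ∣ l ^ i * (m * n) ^ j := dvd_mul_of_dvd_right (dvd_pow_self _ hj) _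
    have hmζ := hstar m hm ((dvd_mul_right m n).trans hmn_dvd)
    have hnζ := hstar n hn ((dvd_mul_left n m).trans hmn_dvd)
    exact hmn (hmζ.trans hσ (hnζ.symm hσ))

end

theorem statement10_general
    {R : Type*} [CommRing R] [IsDomain R] [UniqueFactorizationMonoid R]
    (σ : R →+* R) (hσ : ∀ r, σ (σ r) = r)
    (lam mu nu : R)
    (hlirr : Irreducible lam) (hmirr : Irreducible mu) (hnirr : Irreducible nu)
    (hlm : ¬ StarAssoc σ lam mu) (hln : ¬ StarAssoc σ lam nu)
    (hmn : ¬ StarAssoc σ mu nu)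
    (pi : ℕ × ℕ × ℕ × ℕ → ℤ)
    (hpi : ∀ v : ℕ × ℕ × ℕ × ℕ,
      pi v = (v.1 : ℤ) - (v.2.1 : ℤ) + (v.2.2.1 : ℤ) - (v.2.2.2 : ℤ))
    (chi : ℕ × ℕ × ℕ × ℕ → R)
    (hchi : ∀ v : ℕ × ℕ × ℕ × ℕ,
      chi v = lam ^ (v.1 + v.2.1) * (mu * nu) ^ (v.2.2.1 + v.2.2.2)) :
    -- (i) `Δ` is trivial
    (∀ v, IsUnit (chi v) → v = (0, 0, 0, 0)) ∧
    -- (ii) `C_λ = ℤ`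
    (∀ n : ℤ, ∃ v, pi v = n ∧ ∃ k : ℕ, Associated (chi v) (lam ^ k)) ∧
    -- (iii) `C_ζ` is trivial for every irreducible `ζ` not `*`-associate to `λ`
    (∀ ζ : R, Irreducible ζ → ¬ StarAssoc σ ζ lam →
      ∀ v, (∃ k : ℕ, Associated (chi v) (Sdual σ ζ ^ k)) → v = (0, 0, 0, 0)) ∧
    -- (iv) `1 ∈ C^ζ` for every irreducible `ζ`, so `Φ_R` is not injective
    (∀ ζ : R, Irreducible ζ → ∃ v, pi v = 1 ∧ ¬ ζ ∣ chi v) := by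
  refine ⟨?_, ?_, ?_, ?_⟩
  · rintro ⟨a, b, c, d⟩ hv
    simp only [hchi] at hv
    rw [isUnit_pow_mul_pow_iff hlirr.not_isUnit hmirr.not_isUnit] at hv
    simp only [Prod.mk.injEq]
    omega
  · intro n
    exact ⟨(n.toNat, (-n).toNat, 0, 0), by simp [hpi], n.natAbs, by simp [hchi]⟩
  · rintro ζ hζ hζl ⟨a, b, c, d⟩ ⟨k, hv⟩
    simp only [hchi] at hv
    have hexp := exponents_eq_zero_of_associated_sdual_pow hσ hlirr.prime hmirr.prime hnirr.prime
      hmn hζ hζl hv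
    simp only [Prod.mk.injEq]
    omega
  · intro ζ hζ
    by_cases hζl : ζ ∣ lam
    · refine ⟨(0, 0, 1, 0), by simp [hpi], ?_⟩
      have hζlam := hζ.associated_of_dvd hlirr hζl
      simp only [hchi, add_zero, pow_zero, pow_one, one_mul]
      intro hdvd
      rcases hζ.prime.dvd_or_dvd hdvd with h | h
      · exact hlm (Or.inl (hζlam.symm.trans (hζ.associated_of_dvd hmirr h)))
      · exact hln (Or.inl (hζlam.symm.trans (hζ.associated_of_dvd hnirr h)))
    · exact ⟨(1, 0, 0, 0), by simp [hpi], by simpa [hchi] using hζl⟩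

/-- The paper's example showing that left primary decomposability does not imply
right primary decomposability: `K = ℕ⁴`, `C = ℤ`, `π(a,b,c,d) = a - b + c - d`,
`χ(a,b,c,d) = λ^{a+b}·(μν)^{c+d}` for pairwise non-`*`-associate self-dual
irreducibles `λ, μ, ν`. -/
theorem statement10
    {R : Type*} [CommRing R] [IsDomain R] [UniqueFactorizationMonoid R]
    (σ : R →+* R) (hσ : ∀ r, σ (σ r) = r)
    (lam mu nu : R)
    (hlirr : Irreducible lam) (hmirr : Irreducible mu) (hnirr : Irreducible nu)
    (hlsd : Associated lam (σ lam)) (hmsd : Associated mu (σ mu))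
    (hnsd : Associated nu (σ nu))
    (hlm : ¬ StarAssoc σ lam mu) (hln : ¬ StarAssoc σ lam nu)
    (hmn : ¬ StarAssoc σ mu nu)
    (pi : ℕ × ℕ × ℕ × ℕ → ℤ)
    (hpi : ∀ v : ℕ × ℕ × ℕ × ℕ,
      pi v = (v.1 : ℤ) - (v.2.1 : ℤ) + (v.2.2.1 : ℤ) - (v.2.2.2 : ℤ))
    (chi : ℕ × ℕ × ℕ × ℕ → R)
    (hchi : ∀ v : ℕ × ℕ × ℕ × ℕ,
      chi v = lam ^ (v.1 + v.2.1) * (mu * nu) ^ (v.2.2.1 + v.2.2.2)) :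
    -- (i) `Δ` is trivial
    (∀ v, IsUnit (chi v) → v = (0, 0, 0, 0)) ∧
    -- (ii) `C_λ = ℤ`
    (∀ n : ℤ, ∃ v, pi v = n ∧ ∃ k : ℕ, Associated (chi v) (lam ^ k)) ∧
    -- (iii) `C_ζ` is trivial for every irreducible `ζ` not `*`-associate to `λ`
    (∀ ζ : R, Irreducible ζ → ¬ StarAssoc σ ζ lam →
      ∀ v, (∃ k : ℕ, Associated (chi v) (Sdual σ ζ ^ k)) → v = (0, 0, 0, 0)) ∧
    -- (iv) `1 ∈ C^ζ` for every irreducible `ζ`, so `Φ_R` is not injective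
    (∀ ζ : R, Irreducible ζ → ∃ v, pi v = 1 ∧ ¬ ζ ∣ chi v) :=
  statement10_general σ hσ lam mu nu hlirr hmirr hnirr hlm hln hmn pi hpi chi hchi
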